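/- arXiv:2312.12177 — 2 statements merged into one kernel-verified Lean document; each statement's English description precedes it below -/
import Mathlib

section
/- Let p > 0, let A be a complex n×n matrix whose spectrum belongs to P_i = {λ ∈ ℂ : (Im λ)² < 2p·Re λ}, and let H be a Hermitian positive definite matrix satisfying HA + A*H − (1/(2p))·A*HA + (1/(4p))·(HA² + (A*)²H) = I. If B is a complex n×n matrix such that HB + B*H − (1/(2p))·(A*HB + B*HA + B*HB) + (1/(4p))·(H(AB + BA + B²) + (AB + BA + B²)*H) > −I (i.e., this matrix plus I is positive definite), then the spectrum of A + B also belongs to P_i. -/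
open Matrix
open scoped ComplexOrder

/-!
For an eigenpair `C v = μ v`, the quadratic form of
`L(C) = H C + C* H - C* H C / 2p + (H C² + C*² H) / 4p` at `v` is
`(μ + μ̄ - |μ|² / 2p + (μ² + μ̄²) / 4p) v* H v = (2 Re μ - (Im μ)² / p) v* H v`.
So `H > 0` and `L(C) > 0` force every eigenvalue of `C` into `P_i`. Expanding `L(A + B)` gives
`L(A)` plus exactly the matrix of the hypothesis on `B`; since `L(A) = I`, `L(A + B) > 0`.
-/

theorem Matrix.exists_mulVec_eq_smul_of_mem_spectrum {K ι : Type*} [Field K] [Fintype ι]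
    [DecidableEq ι] {A : Matrix ι ι K} {μ : K} (hμ : μ ∈ spectrum K A) :
    ∃ v ≠ 0, A *ᵥ v = μ • v := by
  rw [← spectrum_toLin', ← Module.End.hasEigenvalue_iff_mem_spectrum] at hμ
  obtain ⟨v, hv⟩ := hμ.exists_hasEigenvector
  exact ⟨v, hv.2, hv.apply_eq_smul⟩

section Eigenvector

variable {R ι : Type*} [CommRing R] [StarRing R] [Fintype ι] {C : Matrix ι ι R} {μ : R}
  {v : ι → R}

theorem star_dotProduct_mul_mulVec_of_mulVec_eq_smul (hv : C *ᵥ v = μ • v)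
    (M : Matrix ι ι R) : star v ⬝ᵥ (M * C) *ᵥ v = μ * (star v ⬝ᵥ M *ᵥ v) := by
  rw [← mulVec_mulVec, hv, mulVec_smul, dotProduct_smul, smul_eq_mul]

theorem star_dotProduct_conjTranspose_mul_mulVec_of_mulVec_eq_smul (hv : C *ᵥ v = μ • v)
    (M : Matrix ι ι R) : star v ⬝ᵥ (Cᴴ * M) *ᵥ v = star μ * (star v ⬝ᵥ M *ᵥ v) := by
  rw [← mulVec_mulVec, dotProduct_mulVec, ← star_mulVec, hv, star_smul, smul_dotProduct,
    smul_eq_mul]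

end Eigenvector

section ParabolaLyapunov

variable {ι : Type*} [Fintype ι] [DecidableEq ι]

noncomputable def parabolaLyapunov (p : ℝ) (H C : Matrix ι ι ℂ) : Matrix ι ι ℂ :=
  H * C + Cᴴ * H - ((1 / (2 * p) : ℝ) : ℂ) • (Cᴴ * H * C)
    + ((1 / (4 * p) : ℝ) : ℂ) • (H * C ^ 2 + Cᴴ ^ 2 * H)

theorem star_dotProduct_parabolaLyapunov_mulVec_of_mulVec_eq_smul (p : ℝ) (H : Matrix ι ι ℂ)
    {C : Matrix ι ι ℂ} {μ : ℂ} {v : ι → ℂ} (hv : C *ᵥ v = μ • v) :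
    star v ⬝ᵥ parabolaLyapunov p H C *ᵥ v
      = ((2 * μ.re - μ.im ^ 2 / p : ℝ) : ℂ) * (star v ⬝ᵥ H *ᵥ v) := by
  have right := star_dotProduct_mul_mulVec_of_mulVec_eq_smul hv
  have left := star_dotProduct_conjTranspose_mul_mulVec_of_mulVec_eq_smul hv
  have hμ : μ + star μ - ((1 / (2 * p) : ℝ) : ℂ) * (μ * star μ)
      + ((1 / (4 * p) : ℝ) : ℂ) * (μ * μ + star μ * star μ)
      = ((2 * μ.re - μ.im ^ 2 / p : ℝ) : ℂ) := by
    apply Complex.ext <;> simp [sq] <;> ring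
  -- The first pass peels `C` off the right of each product, the second `Cᴴ` off the left.
  simp only [parabolaLyapunov, add_mulVec, sub_mulVec, smul_mulVec, dotProduct_add,
    dotProduct_sub, dotProduct_smul, smul_eq_mul, sq C, sq Cᴴ, ← mul_assoc, right, left]
  simp only [mul_assoc, left]
  linear_combination (star v ⬝ᵥ H *ᵥ v) * hμ

theorem parabola_of_posDef_parabolaLyapunov {p : ℝ} (hp : 0 < p) {H C : Matrix ι ι ℂ}
    (hH : H.PosDef) (hL : (parabolaLyapunov p H C).PosDef) :
    ∀ μ ∈ spectrum ℂ C, μ.im ^ 2 < 2 * p * μ.re := by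
  intro μ hμ
  obtain ⟨v, hv0, hv⟩ := exists_mulVec_eq_smul_of_mem_spectrum hμ
  have hLv := hL.dotProduct_mulVec_pos hv0
  rw [star_dotProduct_parabolaLyapunov_mulVec_of_mulVec_eq_smul p H hv] at hLv
  have hpos : 0 < 2 * μ.re - μ.im ^ 2 / p :=
    Complex.zero_lt_real.mp (pos_of_mul_pos_left hLv (hH.dotProduct_mulVec_pos hv0).le)
  rw [sub_pos, div_lt_iff₀ hp] at hpos
  linarith

theorem parabolaLyapunov_add (p : ℝ) (H A B : Matrix ι ι ℂ) :
    parabolaLyapunov p H (A + B)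
      = H * B + Bᴴ * H - ((1 / (2 * p) : ℝ) : ℂ) • (Aᴴ * H * B + Bᴴ * H * A + Bᴴ * H * B)
        + ((1 / (4 * p) : ℝ) : ℂ) •
          (H * (A * B + B * A + B ^ 2) + (A * B + B * A + B ^ 2)ᴴ * H)
        + parabolaLyapunov p H A := by
  simp only [parabolaLyapunov, conjTranspose_add, conjTranspose_mul, conjTranspose_pow,
    Algebra.smul_def]
  noncomm_ring

end ParabolaLyapunov

theorem spectrum_perturbed_in_parabola_general {n : ℕ} (p : ℝ) (hp : 0 < p)
    (A : Matrix (Fin n) (Fin n) ℂ)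
    (H : Matrix (Fin n) (Fin n) ℂ) (hH : H.PosDef)
    (heq : H * A + Aᴴ * H - ((1 / (2 * p) : ℝ) : ℂ) • (Aᴴ * H * A)
      + ((1 / (4 * p) : ℝ) : ℂ) • (H * A ^ 2 + Aᴴ ^ 2 * H) = 1)
    (B : Matrix (Fin n) (Fin n) ℂ)
    (hB : (H * B + Bᴴ * H - ((1 / (2 * p) : ℝ) : ℂ) • (Aᴴ * H * B + Bᴴ * H * A + Bᴴ * H * B)
      + ((1 / (4 * p) : ℝ) : ℂ) •
        (H * (A * B + B * A + B ^ 2) + (A * B + B * A + B ^ 2)ᴴ * H) + 1).PosDef) :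
    ∀ μ ∈ spectrum ℂ (A + B), μ.im ^ 2 < 2 * p * μ.re := by
  refine parabola_of_posDef_parabolaLyapunov hp hH ?_
  rwa [parabolaLyapunov_add, show parabolaLyapunov p H A = 1 from heq]

/-- Perturbation theorem for the interior of the parabola: if the spectrum of `A`
lies in `P_i`, `H > 0` solves the parabolic Lyapunov-type equation with right-hand
side `I`, and the perturbation `B` satisfies the matrix inequality (15), then the
spectrum of `A + B` also lies in `P_i`. -/
theorem spectrum_perturbed_in_parabola {n : ℕ} (p : ℝ) (hp : 0 < p)
    (A : Matrix (Fin n) (Fin n) ℂ)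
    (hA : ∀ μ ∈ spectrum ℂ A, μ.im ^ 2 < 2 * p * μ.re)
    (H : Matrix (Fin n) (Fin n) ℂ) (hH : H.PosDef)
    (heq : H * A + Aᴴ * H - ((1 / (2 * p) : ℝ) : ℂ) • (Aᴴ * H * A)
      + ((1 / (4 * p) : ℝ) : ℂ) • (H * A ^ 2 + Aᴴ ^ 2 * H) = 1)
    (B : Matrix (Fin n) (Fin n) ℂ)
    (hB : (H * B + Bᴴ * H - ((1 / (2 * p) : ℝ) : ℂ) • (Aᴴ * H * B + Bᴴ * H * A + Bᴴ * H * B)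
      + ((1 / (4 * p) : ℝ) : ℂ) •
        (H * (A * B + B * A + B ^ 2) + (A * B + B * A + B ^ 2)ᴴ * H) + 1).PosDef) :
    ∀ μ ∈ spectrum ℂ (A + B), μ.im ^ 2 < 2 * p * μ.re :=
  spectrum_perturbed_in_parabola_general p hp A H hH heq B hB
end

section
/- Let a > b > 0, let C be a Hermitian positive definite complex n×n matrix, and let A be a complex n×n matrix. If there exists a Hermitian positive definite matrix H satisfying H − (1/(2a²) + 1/(2b²))·A*HA − (1/(4a²) − 1/(4b²))·(HA² + (A*)²H) = −C, then every eigenvalue μ of A satisfies (Re μ)²/a² + (Im μ)²/b² > 1. -/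
open Matrix
open scoped ComplexOrder

/-! Pairing the equation with an eigenvector `v` of `A` for `μ` turns every term into a multiple
of `v* H v`; the multipliers add up to `1 - (Re μ)²/a² - (Im μ)²/b²`, so this number times
`v* H v > 0` equals `-v* C v < 0`. -/

namespace Matrix

variable {m l R : Type*} [Fintype m] [Fintype l]

theorem exists_mulVec_eq_smul_of_mem_spectrum_s18 [DecidableEq m] {K : Type*} [Field K]
    {A : Matrix m m K} {μ : K} (h : μ ∈ spectrum K A) : ∃ v, v ≠ 0 ∧ A *ᵥ v = μ • v := by
  rw [← spectrum_toLin', ← Module.End.hasEigenvalue_iff_mem_spectrum] at h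
  obtain ⟨v, hv⟩ := h.exists_hasEigenvector
  exact ⟨v, hv.2, by simpa using hv.apply_eq_smul⟩

theorem pow_mulVec_eq_smul_of_mulVec_eq_smul [DecidableEq m] [CommSemiring R]
    {A : Matrix m m R} {μ : R} {v : m → R} (h : A *ᵥ v = μ • v) (k : ℕ) :
    (A ^ k) *ᵥ v = μ ^ k • v := by
  induction k with
  | zero => simp
  | succ k ih => rw [pow_succ, ← mulVec_mulVec, h, mulVec_smul, ih, smul_smul, pow_succ']

theorem dotProduct_mul_mulVec_of_mulVec_eq_smul [CommSemiring R] (w : m → R) (M : Matrix m l R)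
    {A : Matrix l l R} {μ : R} {v : l → R} (h : A *ᵥ v = μ • v) :
    w ⬝ᵥ ((M * A) *ᵥ v) = μ * (w ⬝ᵥ (M *ᵥ v)) := by
  rw [← mulVec_mulVec, h, mulVec_smul, dotProduct_smul, smul_eq_mul]

theorem star_dotProduct_conjTranspose_mul_mulVec_of_mulVec_eq_smul [CommSemiring R] [StarRing R]
    {B : Matrix m m R} {ν : R} {w : m → R} (h : B *ᵥ w = ν • w) (M : Matrix m l R) (u : l → R) :
    star w ⬝ᵥ ((Bᴴ * M) *ᵥ u) = star ν * (star w ⬝ᵥ (M *ᵥ u)) := by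
  rw [← mulVec_mulVec, dotProduct_mulVec, ← star_mulVec, h, star_smul, smul_dotProduct,
    smul_eq_mul]

end Matrix

theorem ellipse_lyapunov_symbol_eq (a b : ℝ) (μ : ℂ) :
    1 - ((1 / (2 * a ^ 2) + 1 / (2 * b ^ 2) : ℝ) : ℂ) * (star μ * μ)
      - ((1 / (4 * a ^ 2) - 1 / (4 * b ^ 2) : ℝ) : ℂ) * (μ ^ 2 + star (μ ^ 2))
      = ((1 - (μ.re ^ 2 / a ^ 2 + μ.im ^ 2 / b ^ 2) : ℝ) : ℂ) := by
  apply Complex.ext <;>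
    simp only [Complex.sub_re, Complex.sub_im, Complex.one_re, Complex.one_im, Complex.mul_re,
      Complex.mul_im, Complex.add_re, Complex.add_im, Complex.ofReal_re, Complex.ofReal_im,
      Complex.star_def, Complex.conj_re, Complex.conj_im, pow_two] <;> ring

theorem spectrum_in_ellipse_exterior_of_lyapunov_general {n : ℕ} (a b : ℝ)
    (C : Matrix (Fin n) (Fin n) ℂ) (hC : C.PosDef) (A : Matrix (Fin n) (Fin n) ℂ)
    (H : Matrix (Fin n) (Fin n) ℂ) (hH : H.PosDef)
    (heq : H - ((1 / (2 * a ^ 2) + 1 / (2 * b ^ 2) : ℝ) : ℂ) • (Aᴴ * H * A)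
      - ((1 / (4 * a ^ 2) - 1 / (4 * b ^ 2) : ℝ) : ℂ) • (H * A ^ 2 + Aᴴ ^ 2 * H) = -C) :
    ∀ μ ∈ spectrum ℂ A, 1 < μ.re ^ 2 / a ^ 2 + μ.im ^ 2 / b ^ 2 := by
  intro μ hμ
  obtain ⟨v, hv, hAv⟩ := exists_mulVec_eq_smul_of_mem_spectrum_s18 hμ
  have hA2v := pow_mulVec_eq_smul_of_mulVec_eq_smul hAv 2
  have hform : ((1 - (μ.re ^ 2 / a ^ 2 + μ.im ^ 2 / b ^ 2) : ℝ) : ℂ) * (star v ⬝ᵥ (H *ᵥ v))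
      = -(star v ⬝ᵥ (C *ᵥ v)) := by
    have h := congrArg (fun M => star v ⬝ᵥ (M *ᵥ v)) heq
    simp only [sub_mulVec, add_mulVec, smul_mulVec, dotProduct_sub, dotProduct_add,
      dotProduct_smul, neg_mulVec, dotProduct_neg, smul_eq_mul, ← conjTranspose_pow] at h
    rw [dotProduct_mul_mulVec_of_mulVec_eq_smul _ _ hAv,
      dotProduct_mul_mulVec_of_mulVec_eq_smul _ _ hA2v,
      star_dotProduct_conjTranspose_mul_mulVec_of_mulVec_eq_smul hAv,
      star_dotProduct_conjTranspose_mul_mulVec_of_mulVec_eq_smul hA2v] at h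
    rw [← ellipse_lyapunov_symbol_eq]
    linear_combination h
  have hq := (Complex.lt_def.mp (hH.dotProduct_mulVec_pos hv)).1
  have hCq := (Complex.lt_def.mp (hC.dotProduct_mulVec_pos hv)).1
  have hre := congrArg Complex.re hform
  rw [Complex.re_ofReal_mul, Complex.neg_re] at hre
  have hneg := neg_of_mul_neg_left (hre ▸ neg_neg_of_pos hCq) hq.le
  linarith

/-- Sufficiency direction of the exterior-ellipse criterion: if the elliptic
Lyapunov-type equation with right-hand side `-C` (with `C > 0`) has a Hermitian
positive definite solution `H`, then every eigenvalue of `A` lies in the open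
exterior of the ellipse. -/
theorem spectrum_in_ellipse_exterior_of_lyapunov {n : ℕ} (a b : ℝ) (hba : b < a) (hb : 0 < b)
    (C : Matrix (Fin n) (Fin n) ℂ) (hC : C.PosDef) (A : Matrix (Fin n) (Fin n) ℂ)
    (H : Matrix (Fin n) (Fin n) ℂ) (hH : H.PosDef)
    (heq : H - ((1 / (2 * a ^ 2) + 1 / (2 * b ^ 2) : ℝ) : ℂ) • (Aᴴ * H * A)
      - ((1 / (4 * a ^ 2) - 1 / (4 * b ^ 2) : ℝ) : ℂ) • (H * A ^ 2 + Aᴴ ^ 2 * H) = -C) :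
    ∀ μ ∈ spectrum ℂ A, 1 < μ.re ^ 2 / a ^ 2 + μ.im ^ 2 / b ^ 2 :=
  spectrum_in_ellipse_exterior_of_lyapunov_general a b C hC A H hH heq
end
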